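/- arXiv:2201.09248 — 5 statements merged into one kernel-verified Lean document; each statement's English description precedes it below -/
import Mathlib

section
/- The kernel of the adjoint Sylvester-type map L^T: ℝ^{3×4} → ℝ^{3×4}, X ↦ Ẽ_3 X + X Ẽ_4^T, is three-dimensional and consists exactly of the matrices X with rows (ξ_1, ξ_2, ξ_3, 0), (−ξ_2, −2ξ_3, 0, 0), (ξ_3, 0, 0, 0) for arbitrary ξ_1, ξ_2, ξ_3 ∈ ℝ. -/
open Matrix

/-- The nilpotent matrix with (Ẽ_q)_{ij} = i·δ_{i+1,j} (1-based indexing). -/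
def Etil (q : ℕ) : Matrix (Fin q) (Fin q) ℝ :=
  Matrix.of fun i j => if (j : ℕ) = (i : ℕ) + 1 then ((i : ℕ) + 1 : ℝ) else 0

/-- The adjoint Sylvester-type map Lᵀ : ℝ^{3×4} → ℝ^{3×4}, X ↦ Ẽ₃ X + X Ẽ₄ᵀ. -/
noncomputable def LT34 : Matrix (Fin 3) (Fin 4) ℝ →ₗ[ℝ] Matrix (Fin 3) (Fin 4) ℝ where
  toFun X := Etil 3 * X + X * (Etil 4)ᵀ
  map_add' X Y := by simp only [Matrix.mul_add, Matrix.add_mul]; abel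
  map_smul' r X := by simp [Matrix.mul_smul, Matrix.smul_mul]

/-- Candidate kernel matrices, as a linear map from ℝ³. -/
noncomputable def kmat : (Fin 3 → ℝ) →ₗ[ℝ] Matrix (Fin 3) (Fin 4) ℝ where
  toFun v := !![v 0, v 1, v 2, 0; -(v 1), -(2 * v 2), 0, 0; v 2, 0, 0, 0]
  map_add' v w := by ext i j; fin_cases i <;> fin_cases j <;> simp [Matrix.vecHead, Matrix.vecTail] <;> ring
  map_smul' r v := by ext i j; fin_cases i <;> fin_cases j <;> simp [Matrix.vecHead, Matrix.vecTail] <;> ring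

lemma LT34_apply (X : Matrix (Fin 3) (Fin 4) ℝ) : LT34 X = Etil 3 * X + X * (Etil 4)ᵀ := rfl

lemma mem_ker_iff (X : Matrix (Fin 3) (Fin 4) ℝ) : X ∈ LinearMap.ker LT34 ↔
    ∃ ξ₁ ξ₂ ξ₃ : ℝ, X = !![ξ₁, ξ₂, ξ₃, 0; -ξ₂, -(2*ξ₃), 0, 0; ξ₃, 0, 0, 0] := by
  constructor
  · intro h
    rw [LinearMap.mem_ker] at h
    have h' : ∀ i j, (Etil 3 * X + X * (Etil 4)ᵀ) i j = 0 := fun i j => congrFun (congrFun h i) j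
    refine ⟨X 0 0, X 0 1, X 0 2, ?_⟩
    ext i j
    have e00 := h' 0 0; have e01 := h' 0 1; have e02 := h' 0 2; have e03 := h' 0 3
    have e10 := h' 1 0; have e11 := h' 1 1; have e12 := h' 1 2; have e13 := h' 1 3
    have e20 := h' 2 0; have e21 := h' 2 1; have e22 := h' 2 2; have e23 := h' 2 3
    simp [Etil, Matrix.mul_apply, Fin.sum_univ_three, Fin.sum_univ_four, Matrix.add_apply,
      Matrix.transpose_apply, show ((0:Fin 4):ℕ)=0 from rfl, show ((1:Fin 4):ℕ)=1 from rfl,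
      show ((2:Fin 4):ℕ)=2 from rfl, show ((3:Fin 4):ℕ)=3 from rfl,
      show ((0:Fin 3):ℕ)=0 from rfl, show ((1:Fin 3):ℕ)=1 from rfl,
      show ((2:Fin 3):ℕ)=2 from rfl] at e00 e01 e02 e03 e10 e11 e12 e13 e20 e21 e22 e23
    fin_cases i <;> fin_cases j <;>
      simp [Matrix.vecHead, Matrix.vecTail] <;> linarith
  · rintro ⟨ξ₁, ξ₂, ξ₃, rfl⟩
    rw [LinearMap.mem_ker, LT34_apply]
    ext i j
    fin_cases i <;> fin_cases j <;>
      simp [Etil, Matrix.mul_apply, Matrix.vecMul, dotProduct, Matrix.vecHead,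
        Matrix.vecTail, Fin.sum_univ_three, Fin.sum_univ_four, Matrix.add_apply,
        Matrix.transpose_apply, show ((0:Fin 4):ℕ)=0 from rfl, show ((1:Fin 4):ℕ)=1 from rfl,
        show ((2:Fin 4):ℕ)=2 from rfl, show ((3:Fin 4):ℕ)=3 from rfl,
        show ((0:Fin 3):ℕ)=0 from rfl, show ((1:Fin 3):ℕ)=1 from rfl,
        show ((2:Fin 3):ℕ)=2 from rfl] <;> ring

noncomputable def kres : (Fin 3 → ℝ) →ₗ[ℝ] LinearMap.ker LT34 :=
  LinearMap.codRestrict _ kmat (fun v => by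
    rw [mem_ker_iff]; exact ⟨v 0, v 1, v 2, rfl⟩)

lemma kres_bij : Function.Bijective kres := by
  constructor
  · intro v w h
    have h' : kmat v = kmat w := congrArg Subtype.val h
    funext i
    have h0 := congrFun (congrFun h' 0) 0
    have h1 := congrFun (congrFun h' 0) 1
    have h2 := congrFun (congrFun h' 0) 2
    simp [kmat] at h0 h1 h2
    fin_cases i <;> assumption
  · rintro ⟨X, hX⟩
    obtain ⟨ξ₁, ξ₂, ξ₃, rfl⟩ := (mem_ker_iff X).mp hX
    exact ⟨![ξ₁, ξ₂, ξ₃], by apply Subtype.ext; simp [kres, kmat]⟩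

/-- the kernel of Lᵀ is three-dimensional and consists exactly of the
matrices with rows (ξ₁, ξ₂, ξ₃, 0), (−ξ₂, −2ξ₃, 0, 0), (ξ₃, 0, 0, 0). -/
theorem stmt5 :
    (∀ X : Matrix (Fin 3) (Fin 4) ℝ, X ∈ LinearMap.ker LT34 ↔
      ∃ ξ₁ ξ₂ ξ₃ : ℝ, X = !![ξ₁, ξ₂, ξ₃, 0; -ξ₂, -(2*ξ₃), 0, 0; ξ₃, 0, 0, 0]) ∧
    Module.finrank ℝ (LinearMap.ker LT34) = 3 := by
  refine ⟨mem_ker_iff, ?_⟩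
  have e := LinearEquiv.ofBijective kres kres_bij
  rw [← e.finrank_eq]
  simp
end

section
/- The kernel of the composed map X ↦ L^T(X Q_3) on ℝ^{3×4}, where Q_3 = I_4 − e_1 e_1^T − e_2 e_2^T, equals the kernel of X ↦ X Q_3, i.e. it consists exactly of matrices of the form X = X̃ (I − Q_3), i.e. matrices supported on the first two columns. -/
open Matrix

def Q3 : Matrix (Fin 4) (Fin 4) ℝ :=
  1 - Matrix.single 0 0 1 - Matrix.single 1 1 1

lemma hQ3 : ∀ a b : Fin 4, Q3 a b = if a = b ∧ 2 ≤ (a : ℕ) then 1 else 0 := by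
  intro a b
  fin_cases a <;> fin_cases b <;>
    simp [Q3, Matrix.single, Matrix.one_apply]

lemma hXQ (X : Matrix (Fin 3) (Fin 4) ℝ) (i : Fin 3) :
    (X * Q3) i 0 = 0 ∧ (X * Q3) i 1 = 0 ∧ (X * Q3) i 2 = X i 2 ∧ (X * Q3) i 3 = X i 3 := by
  refine ⟨?_, ?_, ?_, ?_⟩ <;>
    simp [Matrix.mul_apply, Fin.sum_univ_four, hQ3, (show ((3:Fin 4):ℕ) = 3 from rfl)]

/-- the kernel of X ↦ Lᵀ(X Q₃) on ℝ^{3×4} equals the kernel of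
X ↦ X Q₃, i.e. X Q₃ = 0 iff the last two columns of X vanish. -/
theorem stmt12 :
    ∀ X : Matrix (Fin 3) (Fin 4) ℝ,
      ((Etil 3 * (X * Q3) + (X * Q3) * (Etil 4)ᵀ = 0) ↔ X * Q3 = 0) ∧
      (X * Q3 = 0 ↔ ∀ i : Fin 3, X i 2 = 0 ∧ X i 3 = 0) := by
  intro X
  have v3 : ((3 : Fin 4) : ℕ) = 3 := rfl
  have hiff2 : X * Q3 = 0 ↔ ∀ i : Fin 3, X i 2 = 0 ∧ X i 3 = 0 := by
    constructor
    · intro h i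
      obtain ⟨_, _, h2, h3⟩ := hXQ X i
      rw [h] at h2 h3
      exact ⟨h2.symm, h3.symm⟩
    · intro h
      ext i j
      obtain ⟨h0, h1, h2, h3⟩ := hXQ X i
      obtain ⟨u2, u3⟩ := h i
      fin_cases j <;> simp_all
  refine ⟨⟨fun h => ?_, fun h => by rw [h]; simp⟩, hiff2⟩
  have h' : ∀ (i : Fin 3) (j : Fin 4),
      (Etil 3 * (X * Q3)) i j + ((X * Q3) * (Etil 4)ᵀ) i j = 0 := by
    intro i j
    have := congrFun (congrFun h i) j
    simpa using this
  have e2 : ∀ i : Fin 3, X i 2 = 0 := by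
    intro i
    have := h' i 1
    fin_cases i <;>
      simp [Matrix.mul_apply, Fin.sum_univ_three, Fin.sum_univ_four, Etil,
        Matrix.transpose_apply, hQ3, v3] at this <;>
      exact this
  have e3 : ∀ i : Fin 3, X i 3 = 0 := by
    intro i
    have := h' i 2
    fin_cases i <;>
      simp [Matrix.mul_apply, Fin.sum_univ_three, Fin.sum_univ_four, Etil,
        Matrix.transpose_apply, hQ3, v3, e2 0, e2 1, e2 2] at this <;>
      exact this.resolve_right (by norm_num)
  exact hiff2.mpr fun i => ⟨e2 i, e3 i⟩
end

section
/- Fredholm solvability of the starting-method condition: for any B ∈ ℝ^{4×4} and Vandermonde matrices V_3, V_4 of a node vector c with distinct nodes, the equation L_{3,4}(P_3^{-T} V_3^T K_0 V_4) Q_3 = V_3^T B V_4 Q_3 always admits a solution K_0 ∈ ℝ^{4×4}; i.e. the compatibility condition tr(X^T V_3^T B V_4 Q_3) = 0 holds automatically for every X in the kernel of the adjoint map. -/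
open Matrix

/-- The Pascal matrix with entries (P_q)_{ij} = C(j-1, i-1) (1-based indexing). -/
def Pas (q : ℕ) : Matrix (Fin q) (Fin q) ℝ :=
  Matrix.of fun i j => ((j : ℕ).choose (i : ℕ) : ℝ)

/-- The Vandermonde matrix (V_q)_{ij} = c_i^{j-1} for a node vector c ∈ ℝ⁴. -/
def Vand (c : Fin 4 → ℝ) (q : ℕ) : Matrix (Fin 4) (Fin q) ℝ :=
  Matrix.of fun i j => c i ^ (j : ℕ)

/-- auxiliary constant matrix -/
noncomputable def Maux : Matrix (Fin 4) (Fin 4) ℝ :=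
  Matrix.of fun i j => if i = 2 ∧ j = 1 then 1/2 else if i = 3 ∧ j = 2 then 1/3 else 0

/-- auxiliary constant matrix -/
noncomputable def Naux : Matrix (Fin 4) (Fin 4) ℝ :=
  Matrix.of fun i j => if i = 3 ∧ j = 1 then -(1/6) else 0

lemma naux_q3 : Naux * Q3 = 0 := by
  ext i j
  fin_cases i <;> fin_cases j <;>
    simp [Naux, Q3, Matrix.mul_apply, Fin.sum_univ_four, Matrix.single,
      Matrix.one_apply, Matrix.sub_apply] <;> norm_num <;> decide

lemma maux_e4_q3 : Maux * Etil 4 * Q3 = Q3 := by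
  ext i j
  fin_cases i <;> fin_cases j <;>
    simp [Maux, Etil, Q3, Matrix.mul_apply, Fin.sum_univ_four, Matrix.single,
      Matrix.one_apply, Matrix.sub_apply] <;> norm_num <;> decide <;> norm_num

lemma maux_naux : Maux * Q3 + Naux * Etil 4 * Q3 = 0 := by
  ext i j
  fin_cases i <;> fin_cases j <;>
    simp [Maux, Naux, Etil, Q3, Matrix.mul_apply, Fin.sum_univ_four, Matrix.single,
      Matrix.one_apply, Matrix.sub_apply] <;> norm_num <;> decide <;> norm_num

lemma pas3_det : IsUnit ((Pas 3)ᵀ).det := by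
  rw [Matrix.det_transpose, Matrix.det_fin_three]
  simp [Pas]

theorem stmt13 (c : Fin 4 → ℝ) (hc : Function.Injective c)
    (B : Matrix (Fin 4) (Fin 4) ℝ) :
    ∃ K0 : Matrix (Fin 4) (Fin 4) ℝ,
      ((Etil 3)ᵀ * ((Pas 3)ᵀ⁻¹ * (Vand c 3)ᵀ * K0 * Vand c 4) +
        ((Pas 3)ᵀ⁻¹ * (Vand c 3)ᵀ * K0 * Vand c 4) * Etil 4) * Q3
      = (Vand c 3)ᵀ * B * Vand c 4 * Q3 := by
  have hV4 : IsUnit (Vand c 4).det := by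
    have : Vand c 4 = Matrix.vandermonde c := rfl
    rw [this, isUnit_iff_ne_zero]
    exact Matrix.det_vandermonde_ne_zero_iff.mpr hc
  set c3 : Fin 3 → ℝ := fun i => c (Fin.castLE (by norm_num) i) with hc3
  have hV3 : IsUnit ((Matrix.vandermonde c3)ᵀ).det := by
    rw [Matrix.det_transpose, isUnit_iff_ne_zero]
    exact Matrix.det_vandermonde_ne_zero_iff.mpr
      (fun a b h => Fin.castLE_injective _ (hc h))
  set R : Matrix (Fin 3) (Fin 4) ℝ := (Vand c 3)ᵀ * B * Vand c 4 with hR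
  set Y : Matrix (Fin 3) (Fin 4) ℝ := R * Maux + (Etil 3)ᵀ * R * Naux with hY
  set Z : Matrix (Fin 3) (Fin 4) ℝ := (Pas 3)ᵀ * Y * (Vand c 4)⁻¹ with hZ
  set K' : Matrix (Fin 3) (Fin 4) ℝ := ((Matrix.vandermonde c3)ᵀ)⁻¹ * Z with hK'
  set K0 : Matrix (Fin 4) (Fin 4) ℝ :=
    Matrix.of fun i j => if h : (i : ℕ) < 3 then K' ⟨i, h⟩ j else 0 with hK0
  refine ⟨K0, ?_⟩
  have key : (Vand c 3)ᵀ * K0 = (Matrix.vandermonde c3)ᵀ * K' := by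
    ext p l
    rw [hK0]
    simp only [Matrix.mul_apply, Matrix.of_apply, Fin.sum_univ_castSucc, Fin.coe_castSucc,
      Fin.val_last, Matrix.transpose_apply, Vand, Matrix.vandermonde, hc3, Fin.is_lt,
      dite_true, Fin.eta, dif_pos]
    norm_num [Fin.castLE, Fin.castSucc, Fin.castAdd, Fin.castLT, Fin.last]
  have hYeq : (Pas 3)ᵀ⁻¹ * (Vand c 3)ᵀ * K0 * Vand c 4 = Y := by
    calc (Pas 3)ᵀ⁻¹ * (Vand c 3)ᵀ * K0 * Vand c 4
        = (Pas 3)ᵀ⁻¹ * ((Vand c 3)ᵀ * K0) * Vand c 4 := by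
          rw [Matrix.mul_assoc ((Pas 3)ᵀ⁻¹)]
      _ = (Pas 3)ᵀ⁻¹ * ((Matrix.vandermonde c3)ᵀ * (((Matrix.vandermonde c3)ᵀ)⁻¹ * Z)) *
            Vand c 4 := by rw [key, hK']
      _ = (Pas 3)ᵀ⁻¹ * Z * Vand c 4 := by
          rw [← Matrix.mul_assoc ((Matrix.vandermonde c3)ᵀ), Matrix.mul_nonsing_inv _ hV3,
            Matrix.one_mul]
      _ = Y := by
          rw [hZ, Matrix.mul_assoc ((Pas 3)ᵀ) Y, ← Matrix.mul_assoc ((Pas 3)ᵀ⁻¹),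
            Matrix.nonsing_inv_mul _ pas3_det, Matrix.one_mul, Matrix.mul_assoc,
            Matrix.nonsing_inv_mul _ hV4, Matrix.mul_one]
  rw [hYeq, hY]
  have expand : ((Etil 3)ᵀ * (R * Maux + (Etil 3)ᵀ * R * Naux)
        + (R * Maux + (Etil 3)ᵀ * R * Naux) * Etil 4) * Q3
      = (Etil 3)ᵀ * R * (Maux * Q3 + Naux * (Etil 4 * Q3))
        + (Etil 3)ᵀ * ((Etil 3)ᵀ * R) * (Naux * Q3)
        + R * (Maux * (Etil 4 * Q3)) := by
    simp only [Matrix.add_mul, Matrix.mul_add, Matrix.mul_assoc]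
    abel
  rw [expand,
    show Maux * Q3 + Naux * (Etil 4 * Q3) = 0 by rw [← Matrix.mul_assoc]; exact maux_naux,
    show Naux * Q3 = 0 from naux_q3,
    show Maux * (Etil 4 * Q3) = Q3 by rw [← Matrix.mul_assoc]; exact maux_e4_q3,
    Matrix.mul_zero, Matrix.mul_zero, add_zero, zero_add]
end

section
/- Necessary condition for the end method (Lemma: elimination of A_N, B_N): if (A_N, B_N, K_N) satisfy the three order conditions A_N V_s − B_N V_s P_s^{-1} − K_N V_s Ẽ_s = 0, V_q^T B_N = V_q^T B, and A_N^T V_q + K_N^T V_q Ẽ_q = w 1_q^T with w^T V_s = 1_s^T, then Ẽ_q^T (V_q^T K_N V_s) + (V_q^T K_N V_s) Ẽ_s = 1_q 1_s^T − V_q^T B V_s P_s^{-1}. -/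
open Matrix

lemma vecMulVec_mul {m n p : Type*} [Fintype n] [Fintype p]
    (a : m → ℝ) (b : n → ℝ) (M : Matrix n p ℝ) :
    Matrix.vecMulVec a b * M = Matrix.vecMulVec a (Matrix.vecMul b M) := by
  ext i j
  simp [Matrix.vecMulVec, Matrix.mul_apply, Matrix.vecMul, dotProduct,
    Finset.mul_sum, mul_assoc]

/-- eliminating A_N and B_N from the three order conditions of the end
method yields the Sylvester-type equation
Ẽ_qᵀ (V_qᵀ K_N V_s) + (V_qᵀ K_N V_s) Ẽ_s = 1_q 1_sᵀ − V_qᵀ B V_s P_s⁻¹. -/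
theorem stmt14 (s q : ℕ) (c : Fin s → ℝ) (hc : Function.Injective c)
    (AN BN KN B : Matrix (Fin s) (Fin s) ℝ) (w : Fin s → ℝ)
    (Vs : Matrix (Fin s) (Fin s) ℝ) (Vq : Matrix (Fin s) (Fin q) ℝ)
    (hVs : Vs = Matrix.of fun i (j : Fin s) => c i ^ (j : ℕ))
    (hVq : Vq = Matrix.of fun i (j : Fin q) => c i ^ (j : ℕ))
    (hi : AN * Vs = BN * Vs * (Pas s)⁻¹ + KN * Vs * Etil s)
    (hii : Vqᵀ * BN = Vqᵀ * B)
    (hiii : Vqᵀ * AN + (Etil q)ᵀ * Vqᵀ * KN = Matrix.vecMulVec (fun _ : Fin q => 1) w)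
    (hiv : Matrix.vecMul w Vs = fun _ => 1) :
    (Etil q)ᵀ * (Vqᵀ * KN * Vs) + (Vqᵀ * KN * Vs) * Etil s =
      Matrix.vecMulVec (fun _ : Fin q => (1 : ℝ)) (fun _ : Fin s => (1 : ℝ)) -
        Vqᵀ * B * Vs * (Pas s)⁻¹ := by
  have h1 : Vqᵀ * AN * Vs = Vqᵀ * BN * Vs * (Pas s)⁻¹ + Vqᵀ * KN * Vs * Etil s := by
    calc Vqᵀ * AN * Vs = Vqᵀ * (AN * Vs) := by rw [Matrix.mul_assoc]
      _ = Vqᵀ * (BN * Vs * (Pas s)⁻¹ + KN * Vs * Etil s) := by rw [hi]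
      _ = Vqᵀ * BN * Vs * (Pas s)⁻¹ + Vqᵀ * KN * Vs * Etil s := by
          rw [Matrix.mul_add, ← Matrix.mul_assoc, ← Matrix.mul_assoc,
            ← Matrix.mul_assoc, ← Matrix.mul_assoc]
  have h2 : Vqᵀ * AN = Matrix.vecMulVec (fun _ : Fin q => 1) w - (Etil q)ᵀ * Vqᵀ * KN :=
    eq_sub_of_add_eq hiii
  have h3 : Matrix.vecMulVec (fun _ : Fin q => (1:ℝ)) w * Vs =
      Matrix.vecMulVec (fun _ : Fin q => (1 : ℝ)) (fun _ : Fin s => (1 : ℝ)) := by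
    rw [_root_.vecMulVec_mul, hiv]
  have h4 : (Matrix.vecMulVec (fun _ : Fin q => (1:ℝ)) w - (Etil q)ᵀ * Vqᵀ * KN) * Vs =
      Vqᵀ * B * Vs * (Pas s)⁻¹ + Vqᵀ * KN * Vs * Etil s := by
    rw [← h2, ← hii]; exact h1
  rw [Matrix.sub_mul, h3] at h4
  have h5 : (Etil q)ᵀ * Vqᵀ * KN * Vs = (Etil q)ᵀ * (Vqᵀ * KN * Vs) := by
    rw [Matrix.mul_assoc, Matrix.mul_assoc, Matrix.mul_assoc]
  rw [h5] at h4
  linear_combination (norm := skip) -h4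
  abel
end

section
/- First compatibility condition via Fredholm alternative: if the Sylvester equation Ẽ_3^T Y + Y Ẽ_4 = 1_3 1_4^T P_4 − V_3^T B V_4 has a solution Y ∈ ℝ^{3×4}, then 1_4^T B 1_4 = 1 (taking B here preconsistent in the sense that the right-hand side is as stated). -/
open Matrix

/-- if the Sylvester equation Ẽ₃ᵀ Y + Y Ẽ₄ = 1₃1₄ᵀ P₄ − V₃ᵀ B V₄
has a solution, then 1ᵀ B 1 = 1. -/
theorem stmt15 (c : Fin 4 → ℝ) (B : Matrix (Fin 4) (Fin 4) ℝ)
    (hsolv : ∃ Y : Matrix (Fin 3) (Fin 4) ℝ,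
      (Etil 3)ᵀ * Y + Y * Etil 4 =
        Matrix.vecMulVec (fun _ : Fin 3 => (1 : ℝ)) (fun _ : Fin 4 => (1 : ℝ)) * Pas 4 -
          (Vand c 3)ᵀ * B * Vand c 4) :
    (fun _ : Fin 4 => (1 : ℝ)) ⬝ᵥ B *ᵥ (fun _ : Fin 4 => (1 : ℝ)) = 1 := by
  obtain ⟨Y, hY⟩ := hsolv
  have h := congrFun (congrFun hY 0) 0
  simp [Matrix.mul_apply, Matrix.add_apply, Matrix.sub_apply, Matrix.vecMulVec_apply,
    Etil, Pas, Vand, Matrix.transpose_apply, Fin.sum_univ_succ,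
    dotProduct, Matrix.mulVec] at h ⊢
  linarith
end
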